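/- (Deterministic core of the ergodicity result.) Let Φ(X) = ∑_k E_k X E_kᴴ be a map on D×D complex matrices with ∑_k E_kᴴ E_k = I, and suppose Φ has a unique invariant state, i.e., there is exactly one positive semidefinite trace-1 matrix ρ_es with Φ(ρ_es) = ρ_es. Then for every density matrix ρ₀, the Cesàro averages converge to the invariant state: (1/N) ∑_{n=1}^{N} Φ^[n](ρ₀) → ρ_es as N → ∞. -/

import Mathlib

open Matrix ComplexOrder Filter

/-- A density matrix: positive semidefinite with trace 1. -/
def IsDensity {D : ℕ} (ρ : Matrix (Fin D) (Fin D) ℂ) : Prop :=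
  ρ.PosSemidef ∧ ρ.trace = 1

/-! A linear map preserving a compact convex set `K` keeps the Cesàro means `A_N` of an orbit in
`K`, and `f A_N - A_N = (f^[N+1] x - f x) / N → 0`, so every cluster point of the means is a fixed
point of `f` in `K`. The density matrices form such a set for a Kraus map: the set is closed and
convex, and bounded because `|ρᵢⱼ|² ≤ ρᵢᵢ ρⱼⱼ ≤ 1`. With a unique invariant state the means have
a single cluster point in a compact set, hence converge to it. -/

open Topology

section Cesaro

variable {E : Type*}

noncomputable def cesaroMean [AddCommMonoid E] [Module ℝ E] (f : E → E) (x : E) (N : ℕ) : E :=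
  (N : ℝ)⁻¹ • ∑ n ∈ Finset.Icc 1 N, f^[n] x

variable {F : Type*} [FunLike F E E]

theorem map_sum_Icc_iterate_sub_sum [AddCommGroup E] [AddMonoidHomClass F E E] (f : F) (x : E)
    (N : ℕ) :
    f (∑ n ∈ Finset.Icc 1 N, f^[n] x) - ∑ n ∈ Finset.Icc 1 N, f^[n] x = f^[N + 1] x - f x := by
  induction N with
  | zero => simp
  | succ N ih =>
    rw [Finset.sum_Icc_succ_top (by omega), map_add, ← Function.iterate_succ_apply' f,
      add_sub_add_comm, ih]
    abel

variable [NormedAddCommGroup E] [NormedSpace ℝ E]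

theorem map_cesaroMean_sub [LinearMapClass F ℝ E E] (f : F) (x : E) (N : ℕ) :
    f (cesaroMean f x N) - cesaroMean f x N = (N : ℝ)⁻¹ • (f^[N + 1] x - f x) := by
  rw [cesaroMean, map_smul, ← smul_sub, map_sum_Icc_iterate_sub_sum]

theorem tendsto_map_cesaroMean_sub_zero [LinearMapClass F ℝ E E] (f : F) {x : E}
    (hx : Bornology.IsBounded (Set.range fun n => f^[n] x)) :
    Tendsto (fun N => f (cesaroMean f x N) - cesaroMean f x N) atTop (𝓝 0) := by
  obtain ⟨C, hC⟩ := hx.exists_norm_le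
  simp_rw [map_cesaroMean_sub]
  refine (tendsto_inv_atTop_zero.comp tendsto_natCast_atTop_atTop).zero_smul_isBoundedUnder_le
    (isBoundedUnder_of ⟨C + C, fun N => ?_⟩)
  exact (norm_sub_le _ _).trans (add_le_add (hC _ ⟨N + 1, rfl⟩) (hC _ ⟨1, rfl⟩))

theorem cesaroMean_mem {f : E → E} {K : Set E} (hK : Convex ℝ K) (hf : Set.MapsTo f K K)
    {x : E} (hx : x ∈ K) {N : ℕ} (hN : 0 < N) : cesaroMean f x N ∈ K := by
  rw [cesaroMean, Finset.smul_sum]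
  refine hK.sum_mem (fun _ _ => by positivity) ?_ fun n _ => hf.iterate n hx
  rw [Finset.sum_const, Nat.card_Icc, Nat.add_sub_cancel, nsmul_eq_mul]
  exact mul_inv_cancel₀ (by positivity)

theorem MapClusterPt.isFixedPt_of_cesaroMean (f : E →L[ℝ] E) {x y : E}
    (hx : Bornology.IsBounded (Set.range fun n => f^[n] x))
    (hy : MapClusterPt y atTop (cesaroMean f x)) : Function.IsFixedPt f y := by
  obtain ⟨U, hU, hUy⟩ := mapClusterPt_iff_ultrafilter.1 hy
  have hfy : Tendsto (fun N => f (cesaroMean f x N)) U (𝓝 (f y)) :=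
    (f.continuous.tendsto y).comp hUy
  have hy' : Tendsto (fun N => f (cesaroMean f x N)) U (𝓝 (y + 0)) :=
    (hUy.add ((tendsto_map_cesaroMean_sub_zero f hx).mono_left hU)).congr fun N => by abel
  exact tendsto_nhds_unique hfy (by rwa [add_zero] at hy')

theorem tendsto_cesaroMean_of_unique_fixedPt (f : E →L[ℝ] E) {K : Set E} (hKc : IsCompact K)
    (hKconv : Convex ℝ K) (hf : Set.MapsTo f K K) {x p : E} (hx : x ∈ K)
    (huniq : ∀ y ∈ K, Function.IsFixedPt f y → y = p) :
    Tendsto (cesaroMean f x) atTop (𝓝 p) :=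
  hKc.tendsto_nhds_of_unique_mapClusterPt
    ((eventually_gt_atTop 0).mono fun _ hN => cesaroMean_mem hKconv hf hx hN)
    fun y hy hclus => huniq y hy <| hclus.isFixedPt_of_cesaroMean f <|
      hKc.isBounded.subset <| Set.range_subset_iff.2 fun n => hf.iterate n hx

end Cesaro

section Kraus

variable {n ι : Type*} [Fintype n] [Fintype ι]

def krausMap (E : ι → Matrix n n ℂ) : Matrix n n ℂ →ₗ[ℂ] Matrix n n ℂ where
  toFun X := ∑ k, E k * X * (E k)ᴴ
  map_add' X Y := by simp only [Matrix.mul_add, Matrix.add_mul, Finset.sum_add_distrib]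
  map_smul' c X := by simp only [Matrix.mul_smul, smul_mul, RingHom.id_apply, Finset.smul_sum]

theorem krausMap_apply (E : ι → Matrix n n ℂ) (X : Matrix n n ℂ) :
    krausMap E X = ∑ k, E k * X * (E k)ᴴ := rfl

theorem Matrix.PosSemidef.krausMap (E : ι → Matrix n n ℂ) {X : Matrix n n ℂ}
    (hX : X.PosSemidef) : (krausMap E X).PosSemidef :=
  posSemidef_sum _ fun k _ => hX.mul_mul_conjTranspose_same (E k)

theorem trace_krausMap [DecidableEq n] {E : ι → Matrix n n ℂ} (hE : ∑ k, (E k)ᴴ * E k = 1)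
    (X : Matrix n n ℂ) : (krausMap E X).trace = X.trace := by
  simp_rw [krausMap_apply, trace_sum, trace_mul_cycle _ X, ← trace_sum, ← Finset.sum_mul, hE,
    one_mul]

end Kraus

section PosSemidef

variable {n : Type*}

theorem Matrix.PosSemidef.normSq_apply_le {A : Matrix n n ℂ} (hA : A.PosSemidef) (i j : n) :
    (Complex.normSq (A i j) : ℂ) ≤ A i i * A j j := by
  have h := (hA.submatrix ![i, j]).det_nonneg
  rw [det_fin_two] at h
  simp only [submatrix_apply, Matrix.cons_val_zero, Matrix.cons_val_one] at h
  rw [← hA.1.apply j i, Complex.star_def, Complex.mul_conj] at h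
  exact sub_nonneg.1 h

variable [Fintype n]

theorem Matrix.PosSemidef.norm_apply_le_one {A : Matrix n n ℂ} (hA : A.PosSemidef)
    (htr : A.trace = 1) (i j : n) : ‖A i j‖ ≤ 1 := by
  have hdiag : ∀ k, A k k ≤ 1 := fun k =>
    (Finset.single_le_sum (f := fun l => A l l) (fun l _ => hA.diag_nonneg)
      (Finset.mem_univ k)).trans_eq htr
  have h := (hA.normSq_apply_le i j).trans (mul_le_one₀ (hdiag i) hA.diag_nonneg (hdiag j))
  rw [Complex.normSq_eq_norm_sq, ← Complex.ofReal_one, Complex.real_le_real] at h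
  exact (sq_le_one_iff₀ (norm_nonneg _)).1 h

theorem isClosed_setOf_posSemidef : IsClosed {A : Matrix n n ℂ | A.PosSemidef} := by
  have : {A : Matrix n n ℂ | A.PosSemidef} =
      {A | A.IsHermitian} ∩ ⋂ x : n → ℂ, {A | 0 ≤ star x ⬝ᵥ A *ᵥ x} := by
    ext A
    simp only [Set.mem_ofPred_eq, Set.mem_inter_iff, Set.mem_iInter,
      posSemidef_iff_dotProduct_mulVec]
  rw [this]
  exact (isClosed_eq continuous_id.matrix_conjTranspose continuous_id).inter <|
    isClosed_iInter fun x => isClosed_le continuous_const <|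
      continuous_const.dotProduct (continuous_id.matrix_mulVec continuous_const)

end PosSemidef

theorem convex_setOf_isDensity {D : ℕ} :
    Convex ℝ {ρ : Matrix (Fin D) (Fin D) ℂ | IsDensity ρ} := by
  intro ρ hρ σ hσ a b ha hb hab
  refine ⟨(hρ.1.smul ha).add (hσ.1.smul hb), ?_⟩
  rw [trace_add, trace_smul, trace_smul, hρ.2, hσ.2, ← add_smul, hab, one_smul]

theorem isClosed_setOf_isDensity {D : ℕ} :
    IsClosed {ρ : Matrix (Fin D) (Fin D) ℂ | IsDensity ρ} :=
  isClosed_setOf_posSemidef.inter (isClosed_eq continuous_id.matrix_trace continuous_const)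

theorem mapsTo_krausMap_setOf_isDensity {D : ℕ} {ι : Type*} [Fintype ι]
    {E : ι → Matrix (Fin D) (Fin D) ℂ} (hE : ∑ k, (E k)ᴴ * E k = 1) :
    Set.MapsTo (krausMap E) {ρ | IsDensity ρ} {ρ | IsDensity ρ} :=
  fun _ hρ => ⟨Matrix.PosSemidef.krausMap E hρ.1, (trace_krausMap hE _).trans hρ.2⟩

attribute [local instance] Matrix.normedAddCommGroup Matrix.normedSpace

theorem isCompact_setOf_isDensity {D : ℕ} :
    IsCompact {ρ : Matrix (Fin D) (Fin D) ℂ | IsDensity ρ} :=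
  (isCompact_closedBall 0 1).of_isClosed_subset isClosed_setOf_isDensity fun _ hρ =>
    mem_closedBall_zero_iff.2 <| (norm_le_iff zero_le_one).2 (hρ.1.norm_apply_le_one hρ.2)

theorem cptp_unique_invariant_cesaro_convergence_general {D : ℕ} {ι : Type*} [Fintype ι]
    (E : ι → Matrix (Fin D) (Fin D) ℂ)
    (hE : ∑ k, (E k)ᴴ * E k = 1)
    (Φ : Matrix (Fin D) (Fin D) ℂ → Matrix (Fin D) (Fin D) ℂ)
    (hΦ : ∀ X, Φ X = ∑ k, E k * X * (E k)ᴴ)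
    (ρes : Matrix (Fin D) (Fin D) ℂ)
    (huniq : ∀ σ, IsDensity σ → Φ σ = σ → σ = ρes)
    (ρ₀ : Matrix (Fin D) (Fin D) ℂ) (hρ₀ : IsDensity ρ₀) :
    Tendsto (fun N : ℕ => (N : ℂ)⁻¹ • ∑ n ∈ Finset.Icc 1 N, Φ^[n] ρ₀)
      atTop (nhds ρes) := by
  obtain rfl : Φ = ((krausMap E).restrictScalars ℝ).toContinuousLinearMap := funext hΦ
  refine (tendsto_cesaroMean_of_unique_fixedPt _ isCompact_setOf_isDensity
    convex_setOf_isDensity (mapsTo_krausMap_setOf_isDensity hE) hρ₀ huniq).congr fun N => ?_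
  rw [cesaroMean, RCLike.real_smul_eq_coe_smul (K := ℂ)]
  push_cast
  rfl

/-- Deterministic core of the ergodicity result: for a CPTP map with a unique
invariant state, the Cesàro averages of the iterates converge to that state. -/
theorem cptp_unique_invariant_cesaro_convergence {D : ℕ} {ι : Type*} [Fintype ι]
    (E : ι → Matrix (Fin D) (Fin D) ℂ)
    (hE : ∑ k, (E k)ᴴ * E k = 1)
    (Φ : Matrix (Fin D) (Fin D) ℂ → Matrix (Fin D) (Fin D) ℂ)
    (hΦ : ∀ X, Φ X = ∑ k, E k * X * (E k)ᴴ)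
    (ρes : Matrix (Fin D) (Fin D) ℂ)
    (hes : IsDensity ρes ∧ Φ ρes = ρes)
    (huniq : ∀ σ, IsDensity σ → Φ σ = σ → σ = ρes)
    (ρ₀ : Matrix (Fin D) (Fin D) ℂ) (hρ₀ : IsDensity ρ₀) :
    Tendsto (fun N : ℕ => (N : ℂ)⁻¹ • ∑ n ∈ Finset.Icc 1 N, Φ^[n] ρ₀)
      atTop (nhds ρes) :=
  cptp_unique_invariant_cesaro_convergence_general E hE Φ hΦ ρes huniq ρ₀ hρ₀
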